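/- Let R be a noetherian local ring with maximal ideal m and dim R > 0, and let S be a nonzero Serre subcategory of the category of R-modules such that every module in S is finitely generated. Then m does not belong to MP[S]; equivalently, no prime ideal of height dim R lies in MP[S]. -/

import Mathlib

/-!
Common framework: a *Serre class* is a class of (bundled) `R`-modules closed under
submodules, quotient modules and extensions.  `MelkerssonCondition R P I` is the
Melkersson condition `(C_I)`: if `Γ_I(M) = M` (every element of `M` is annihilated by
some power of `I`) and `(0 :_M I)` (the `I`-torsion-by-`I` submodule `torsionBySet`)
belongs to the class, then `M` belongs to the class.  `MP R P` is the set of prime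
ideals `p` such that the class satisfies `(C_p)`.
-/

open CategoryTheory

structure SerreClass (R : Type) [CommRing R] where
  mem : ModuleCat.{0} R → Prop
  mem_of_injective : ∀ {M N : ModuleCat.{0} R} (f : M →ₗ[R] N),
    Function.Injective f → mem N → mem M
  mem_of_surjective : ∀ {M N : ModuleCat.{0} R} (f : M →ₗ[R] N),
    Function.Surjective f → mem M → mem N
  mem_of_extension : ∀ {A M B : ModuleCat.{0} R} (f : A →ₗ[R] M) (g : M →ₗ[R] B),
    Function.Injective f → Function.Surjective g →
    LinearMap.range f = LinearMap.ker g → mem A → mem B → mem M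

variable (R : Type) [CommRing R]

/-- `Γ_I(M) = M`: every element of `M` is annihilated by some power of `I`. -/
def IsTorsionByPowers (I : Ideal R) (M : ModuleCat.{0} R) : Prop :=
  ∀ m : M, ∃ n : ℕ, ∀ x ∈ I ^ n, x • m = 0

/-- The Melkersson condition `(C_I)` for a class `P` of `R`-modules:
if `Γ_I(M) = M` and `(0 :_M I) ∈ P` then `M ∈ P`. -/
def MelkerssonCondition (P : ModuleCat.{0} R → Prop) (I : Ideal R) : Prop :=
  ∀ M : ModuleCat.{0} R, IsTorsionByPowers R I M →
    P (ModuleCat.of R (Submodule.torsionBySet R M (I : Set R))) → P M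

/-- `MP[P]`: the set of prime ideals `p` such that `P` satisfies `(C_p)`. -/
def MP (P : ModuleCat.{0} R → Prop) : Set (PrimeSpectrum R) :=
  { p | MelkerssonCondition R P p.asIdeal }

/-- The class `FG` of finitely generated `R`-modules. -/
def FGClass : ModuleCat.{0} R → Prop := fun M => Module.Finite R M

/-- Membership in the extension subcategory `P * Q`: `M` fits in a short exact
sequence `0 → A → M → B → 0` with `A ∈ P` and `B ∈ Q`. -/
def IsExtensionIn (P Q : ModuleCat.{0} R → Prop) (M : ModuleCat.{0} R) : Prop :=
  ∃ (A B : ModuleCat.{0} R) (f : A →ₗ[R] M) (g : M →ₗ[R] B),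
    Function.Injective f ∧ Function.Surjective g ∧
    LinearMap.range f = LinearMap.ker g ∧ P A ∧ Q B

/-- `Supp(P) = ⋃_{M ∈ P} Supp_R M`. -/
def SuppClass (P : ModuleCat.{0} R → Prop) : Set (PrimeSpectrum R) :=
  ⋃ (M : ModuleCat.{0} R) (_ : P M), Module.support R M

/-- `E` is an injective hull of `N`: `E` is injective and contains `N` as an
essential submodule. -/
def IsInjectiveHull (N E : ModuleCat.{0} R) : Prop :=
  Module.Injective R E ∧ ∃ f : N →ₗ[R] E, Function.Injective f ∧
    ∀ W : Submodule R E, W ≠ ⊥ → W ⊓ LinearMap.range f ≠ ⊥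

/-- `M` is `I`-cofinite: `Supp M ⊆ V(I)` and `Ext^i_R(R/I, M)` is a finitely
generated `R`-module for every `i`. -/
noncomputable def IsCofiniteWrt (I : Ideal R) (M : ModuleCat.{0} R) : Prop :=
  Module.support R M ⊆ PrimeSpectrum.zeroLocus (I : Set R) ∧
  ∀ i : ℕ, Module.Finite R
    (((Ext R (ModuleCat.{0} R) i).obj (Opposite.op (ModuleCat.of R (R ⧸ I)))).obj M)

/-- A specialization closed subset of `Spec R`. -/
def SpecializationClosed (W : Set (PrimeSpectrum R)) : Prop :=
  ∀ p ∈ W, ∀ q : PrimeSpectrum R, p.asIdeal ≤ q.asIdeal → q ∈ W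

/-!
A nonzero finitely generated module in `S` has `R/m` as a quotient, so `S` contains every
finitely generated module killed by `m`. Take a prime `q` maximal among the primes strictly
below `m` and `x ∈ m \ q`; then `m` is the radical of `(x) + q`. Over the domain `D = R/q` the
module `M = D_x / D` is `m`-power torsion, and `(0 :_M m) ⊆ (0 :_M x) = D · x⁻¹` is finitely
generated and killed by `m`, hence lies in `S`. So `(C_m)` would put `M` in `S` and make it
finitely generated; as `x ∈ m` acts surjectively on `M`, Nakayama gives `M = 0`, contradicting
`x⁻¹ ∉ D`. A prime of height `dim R` is `m` itself.
-/

variable {R}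

namespace SerreClass

variable (S : SerreClass R) {M N : Type} [AddCommGroup M] [Module R M] [AddCommGroup N] [Module R N]

lemma mem_of_surjective' (f : M →ₗ[R] N) (hf : Function.Surjective f)
    (hM : S.mem (ModuleCat.of R M)) : S.mem (ModuleCat.of R N) :=
  S.mem_of_surjective (M := .of R M) (N := .of R N) f hf hM

lemma mem_prod (hM : S.mem (ModuleCat.of R M)) (hN : S.mem (ModuleCat.of R N)) :
    S.mem (ModuleCat.of R (M × N)) :=
  S.mem_of_extension (A := .of R M) (M := .of R (M × N)) (B := .of R N)
    (LinearMap.inl R M N) (LinearMap.snd R M N) LinearMap.inl_injective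
    LinearMap.snd_surjective (LinearMap.range_inl R M N) hM hN

lemma mem_sup {W₁ W₂ : Submodule R M} (h₁ : S.mem (ModuleCat.of R W₁))
    (h₂ : S.mem (ModuleCat.of R W₂)) : S.mem (ModuleCat.of R ↥(W₁ ⊔ W₂)) := by
  let f := W₁.subtype.coprod W₂.subtype
  have hrange : LinearMap.range f = W₁ ⊔ W₂ := by
    rw [LinearMap.range_coprod, Submodule.range_subtype, Submodule.range_subtype]
  exact S.mem_of_surjective' ((LinearEquiv.ofEq _ _ hrange).toLinearMap ∘ₗ f.rangeRestrict)
    ((LinearEquiv.ofEq _ _ hrange).surjective.comp f.surjective_rangeRestrict)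
    (S.mem_prod h₁ h₂)

lemma mem_of_forall_mem_span_singleton [Module.Finite R M]
    (h : ∀ x : M, S.mem (ModuleCat.of R (R ∙ x))) : S.mem (ModuleCat.of R M) := by
  have hfg : ∀ W : Submodule R M, W.FG → S.mem (ModuleCat.of R W) := fun W hW =>
    Submodule.fg_induction (motive := fun W _ => S.mem (ModuleCat.of R W)) h
      (fun _ _ _ _ => S.mem_sup) W hW
  exact S.mem_of_surjective' Submodule.topEquiv.toLinearMap Submodule.topEquiv.surjective
    (hfg ⊤ Module.Finite.fg_top)

lemma mem_of_isTorsionBySet {I : Ideal R} (hI : S.mem (ModuleCat.of R (R ⧸ I)))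
    [Module.Finite R M] (hM : Module.IsTorsionBySet R M I) : S.mem (ModuleCat.of R M) := by
  refine S.mem_of_forall_mem_span_singleton fun x => ?_
  have hle : I ≤ Ideal.torsionOf R M x := fun r hr => @hM x ⟨r, hr⟩
  exact S.mem_of_surjective'
    ((Ideal.quotTorsionOfEquivSpanSingleton R M x).toLinearMap ∘ₗ Submodule.factor hle)
    ((Ideal.quotTorsionOfEquivSpanSingleton R M x).surjective.comp
      (Submodule.factor_surjective hle)) hI

lemma mem_quotient_maximalIdeal [IsLocalRing R] [Nontrivial M] [Module.Finite R M]
    (hM : S.mem (ModuleCat.of R M)) :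
    S.mem (ModuleCat.of R (R ⧸ IsLocalRing.maximalIdeal R)) := by
  obtain ⟨N, hN⟩ := IsCoatomic.exists_coatom (α := Submodule R M)
  have : IsSimpleModule R (M ⧸ N) := (isSimpleModule_iff_isCoatom).mpr hN
  obtain ⟨I, hI, ⟨e⟩⟩ := isSimpleModule_iff_quot_maximal.mp this
  obtain rfl := IsLocalRing.eq_maximalIdeal hI
  exact S.mem_of_surjective' (e.toLinearMap ∘ₗ N.mkQ) (e.surjective.comp N.mkQ_surjective) hM

end SerreClass

lemma subsingleton_of_smul_surjective [IsLocalRing R] {M : Type} [AddCommGroup M] [Module R M]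
    [Module.Finite R M] {x : R} (hx : x ∈ IsLocalRing.maximalIdeal R)
    (h : Function.Surjective (x • · : M → M)) : Subsingleton M := by
  have htop : (⊤ : Submodule R M) ≤ IsLocalRing.maximalIdeal R • ⊤ := fun m _ => by
    obtain ⟨m', rfl⟩ := h m
    exact Submodule.smul_mem_smul hx Submodule.mem_top
  have hbot : (⊤ : Submodule R M) = ⊥ := Submodule.eq_bot_of_le_smul_of_le_jacobson_bot _ ⊤
    Module.Finite.fg_top htop (IsLocalRing.maximalIdeal_le_jacobson ⊥)
  exact subsingleton_of_forall_eq 0 fun m => (Submodule.mem_bot R).mp (hbot ▸ Submodule.mem_top)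

lemma exists_isPrime_maximalIdeal_le_radical [IsNoetherianRing R] [IsLocalRing R]
    (hdim : 0 < ringKrullDim R) :
    ∃ q : Ideal R, q.IsPrime ∧ ∃ x ∈ IsLocalRing.maximalIdeal R, x ∉ q ∧
      IsLocalRing.maximalIdeal R ≤ (Ideal.span {x} ⊔ q).radical := by
  obtain ⟨p₀, p₁, hp⟩ := Order.krullDim_pos_iff.mp hdim
  obtain ⟨q, ⟨hq, hqm⟩, hqmax⟩ :=
    set_has_maximal_iff_noetherian.mpr inferInstance
      {P : Ideal R | P.IsPrime ∧ P < IsLocalRing.maximalIdeal R}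
      ⟨p₀.asIdeal, p₀.2, (show p₀.asIdeal < p₁.asIdeal from hp).trans_le
        (IsLocalRing.le_maximalIdeal p₁.2.ne_top)⟩
  obtain ⟨x, hxm, hxq⟩ := SetLike.exists_of_lt hqm
  refine ⟨q, hq, x, hxm, hxq, ?_⟩
  rw [Ideal.radical_eq_sInf]
  refine le_sInf fun P ⟨hle, hP⟩ => ?_
  by_contra hmP
  have hPm : P < IsLocalRing.maximalIdeal R :=
    lt_of_le_of_ne (IsLocalRing.le_maximalIdeal hP.ne_top) fun h => hmP h.ge
  have hxP : x ∈ P := hle (Ideal.mem_sup_left (Ideal.mem_span_singleton_self x))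
  exact hqmax P ⟨hP, hPm⟩ (lt_of_le_of_ne (le_sup_right.trans hle) fun h => hxq (h ▸ hxP))

/-- `A_x / A`, with `x : R` acting on `A` through `algebraMap R A`. -/
abbrev AwayQuotient (A : Type) [CommRing A] [Algebra R A] (x : R) : Type :=
  Localization.Away (algebraMap R A x) ⧸
    LinearMap.range (IsScalarTower.toAlgHom R A (Localization.Away (algebraMap R A x))).toLinearMap

namespace AwayQuotient

variable {A : Type} [CommRing A] [Algebra R A] (x : R)

lemma smul_eq_algebraMap_mul (r : R) (l : Localization.Away (algebraMap R A x)) :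
    r • l = algebraMap A _ (algebraMap R A r) * l := by
  rw [Algebra.smul_def, IsScalarTower.algebraMap_apply R A (Localization.Away (algebraMap R A x)) r]

lemma mem_range_iff (l : Localization.Away (algebraMap R A x)) :
    l ∈ LinearMap.range
        (IsScalarTower.toAlgHom R A (Localization.Away (algebraMap R A x))).toLinearMap ↔
      ∃ b : A, algebraMap A _ b = l := by
  simp

lemma smul_surjective : Function.Surjective (x • · : AwayQuotient A x → AwayQuotient A x) := by
  intro m
  obtain ⟨l, rfl⟩ := Submodule.mkQ_surjective _ m
  refine ⟨Submodule.mkQ _ (IsLocalization.Away.invSelf (algebraMap R A x) * l), ?_⟩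
  change x • Submodule.mkQ _ _ = _
  rw [← map_smul, smul_eq_algebraMap_mul, ← mul_assoc, IsLocalization.Away.mul_invSelf, one_mul]

lemma mk_invSelf_ne_zero [IsDomain A] (h0 : algebraMap R A x ≠ 0)
    (hu : ¬ IsUnit (algebraMap R A x)) :
    Submodule.mkQ _ (IsLocalization.Away.invSelf (algebraMap R A x)) ≠
      (0 : AwayQuotient A x) := by
  rw [ne_eq, Submodule.mkQ_apply, Submodule.Quotient.mk_eq_zero, mem_range_iff]
  rintro ⟨b, hb⟩
  have hinj := IsLocalization.injective (Localization.Away (algebraMap R A x))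
    (powers_le_nonZeroDivisors_of_noZeroDivisors h0)
  refine hu (IsUnit.of_mul_eq_one b (hinj ?_))
  rw [map_mul, hb, IsLocalization.Away.mul_invSelf, map_one]

variable (A) in
noncomputable def mkMulInvSelf : A →ₗ[R] AwayQuotient A x :=
  Submodule.mkQ _ ∘ₗ (LinearMap.toSpanSingleton A _
    (IsLocalization.Away.invSelf (algebraMap R A x))).restrictScalars R

lemma torsionBy_le_range_mkMulInvSelf :
    Submodule.torsionBy R (AwayQuotient A x) x ≤ LinearMap.range (mkMulInvSelf A x) := by
  intro m hm
  obtain ⟨l, rfl⟩ := Submodule.mkQ_surjective _ m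
  rw [Submodule.mem_torsionBy_iff, ← map_smul, Submodule.mkQ_apply,
    Submodule.Quotient.mk_eq_zero, mem_range_iff] at hm
  obtain ⟨b, hb⟩ := hm
  refine ⟨b, congrArg (Submodule.mkQ _) ?_⟩
  rw [smul_eq_algebraMap_mul] at hb
  rw [LinearMap.restrictScalars_apply, LinearMap.toSpanSingleton_apply, Algebra.smul_def, hb,
    mul_right_comm, IsLocalization.Away.mul_invSelf, one_mul]

lemma finite_torsionBySet [IsNoetherianRing R] [Module.Finite R A] {I : Ideal R} (hx : x ∈ I) :
    Module.Finite R (Submodule.torsionBySet R (AwayQuotient A x) I) := by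
  rw [Module.Finite.iff_fg]
  refine Submodule.FG.of_le
    (LinearMap.range_eq_map (mkMulInvSelf A x) ▸ Module.Finite.fg_top.map _)
    (le_trans ?_ (torsionBy_le_range_mkMulInvSelf x))
  rw [← Submodule.torsionBySet_singleton_eq]
  exact Submodule.torsionBySet_le_torsionBySet_of_subset (Set.singleton_subset_iff.mpr hx)

lemma isTorsionByPowers [IsNoetherianRing R] {I : Ideal R}
    (hI : I ≤ (Ideal.span {x} ⊔ RingHom.ker (algebraMap R A)).radical) :
    IsTorsionByPowers R I (ModuleCat.of R (AwayQuotient A x)) := by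
  intro m
  obtain ⟨l, rfl⟩ := Submodule.mkQ_surjective _ m
  obtain ⟨n, b, hb⟩ := IsLocalization.Away.surj (algebraMap R A x) l
  have hle : Ideal.span {x} ⊔ RingHom.ker (algebraMap R A) ≤
      (Ideal.span {x ^ n} ⊔ RingHom.ker (algebraMap R A)).radical :=
    sup_le (Ideal.span_le.mpr (Set.singleton_subset_iff.mpr
        ⟨n, Ideal.mem_sup_left (Ideal.mem_span_singleton_self _)⟩))
      (le_sup_right.trans Ideal.le_radical)
  obtain ⟨k, hk⟩ := Ideal.exists_pow_le_of_le_radical_of_fg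
    (hI.trans (Ideal.radical_le_radical_iff.mpr hle)) (IsNoetherian.noetherian I)
  refine ⟨k, fun c hc => ?_⟩
  obtain ⟨y, hy, z, hz, rfl⟩ := Submodule.mem_sup.mp (hk hc)
  obtain ⟨r, rfl⟩ := Ideal.mem_span_singleton'.mp hy
  change _ • Submodule.mkQ _ l = 0
  rw [← map_smul, Submodule.mkQ_apply, Submodule.Quotient.mk_eq_zero, mem_range_iff]
  refine ⟨algebraMap R A r * b, ?_⟩
  rw [smul_eq_algebraMap_mul, map_add, RingHom.mem_ker.mp hz, add_zero, map_mul, map_mul,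
    map_mul, map_pow, map_pow, ← hb]
  ring

end AwayQuotient

theorem SerreClass.not_melkerssonCondition_maximalIdeal [IsNoetherianRing R] [IsLocalRing R]
    (hdim : 0 < ringKrullDim R) (S : SerreClass R)
    (hS : ∃ M : ModuleCat.{0} R, S.mem M ∧ Nontrivial M)
    (hfg : ∀ M : ModuleCat.{0} R, S.mem M → Module.Finite R M) :
    ¬ MelkerssonCondition R S.mem (IsLocalRing.maximalIdeal R) := by
  intro hC
  obtain ⟨N, hN, _⟩ := hS
  have := hfg N hN
  have hk := S.mem_quotient_maximalIdeal hN
  obtain ⟨q, hq, x, hxm, hxq, hrad⟩ := exists_isPrime_maximalIdeal_le_radical hdim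
  have hker : RingHom.ker (algebraMap R (R ⧸ q)) = q := by
    rw [Ideal.Quotient.algebraMap_eq, Ideal.mk_ker]
  have htors := AwayQuotient.isTorsionByPowers (A := R ⧸ q) x (hker ▸ hrad)
  have := AwayQuotient.finite_torsionBySet (A := R ⧸ q) x hxm
  have hsocle : S.mem (.of R (Submodule.torsionBySet R (AwayQuotient (R ⧸ q) x)
      (IsLocalRing.maximalIdeal R))) :=
    S.mem_of_isTorsionBySet hk (Submodule.torsionBySet_isTorsionBySet _)
  have := hfg _ (hC _ htors hsocle)
  have := subsingleton_of_smul_surjective hxm (AwayQuotient.smul_surjective (A := R ⧸ q) x)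
  have hx0 : algebraMap R (R ⧸ q) x ≠ 0 := by
    rwa [ne_eq, Ideal.Quotient.algebraMap_eq, Ideal.Quotient.eq_zero_iff_mem]
  have hxu : ¬ IsUnit (algebraMap R (R ⧸ q) x) := by
    have := isLocalHom_of_le_jacobson_bot q
      ((IsLocalRing.le_maximalIdeal hq.ne_top).trans (IsLocalRing.maximalIdeal_le_jacobson ⊥))
    rw [Ideal.Quotient.algebraMap_eq]
    exact fun hu => (IsLocalRing.mem_maximalIdeal x).mp hxm (hu.of_map _ _)
  exact AwayQuotient.mk_invSelf_ne_zero x hx0 hxu (Subsingleton.elim _ _)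

/-- Over a noetherian local ring of positive dimension, a nonzero Serre class consisting
of finitely generated modules does not satisfy `(C_m)`; equivalently no prime of height
`dim R` lies in `MP[S]`. -/
theorem stmt_5 {R : Type} [CommRing R] [IsNoetherianRing R] [IsLocalRing R]
    (hdim : 0 < ringKrullDim R)
    (S : SerreClass R) (hS : ∃ M : ModuleCat.{0} R, S.mem M ∧ Nontrivial M)
    (hfg : ∀ M : ModuleCat.{0} R, S.mem M → Module.Finite R M) :
    ¬ MelkerssonCondition R S.mem (IsLocalRing.maximalIdeal R) ∧
    ∀ p : PrimeSpectrum R, (Order.height p : WithBot ℕ∞) = ringKrullDim R →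
      p ∉ MP R S.mem := by
  have hC := S.not_melkerssonCondition_maximalIdeal hdim hS hfg
  refine ⟨hC, fun p hp hpMP => hC ?_⟩
  rw [← p.height_eq_orderHeight, Ideal.height_eq_ringKrullDim_iff] at hp
  rwa [← hp]
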